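/- Let R be a nonzero ring and let C_R^e be the set of all regular elements c of R such that Rc is an essential left ideal of R and cR is an essential right ideal of R. Suppose that C_R^e meets every essential left ideal of R and every essential right ideal of R. Then C_R^e is both a left denominator set and a right denominator set of R, and ass_l(C_R^e) = ass_r(C_R^e) = 0 (where ass_l(S) := {r ∈ R | sr = 0 for some s ∈ S} and ass_r(S) := {r ∈ R | rs = 0 for some s ∈ S}). -/

import Mathlib

/-!
Pulling back along a linear map preserves essential submodules, so for `s ∈ C_R^e` the left ideal
`{a | a r ∈ Rs}` is essential; the hypothesis puts some `s' ∈ C_R^e` in it, and `s' r = r' s` is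
the left Ore condition (symmetrically on the right). `R(st)` is the image of `Rs` under the
injective map `a ↦ a t`, whose image `Rt` is essential, so `C_R^e` is closed under products.
Since elements of `C_R^e` are regular, the denominator conditions and `assₗ = assᵣ = 0` are
immediate.
-/

/-- The set `C_R^e` of regular elements `c` of `R` such that the left ideal
`Rc = span R {c}` is an essential left ideal of `R` and the right ideal
`cR = span Rᵐᵒᵖ {c}` is an essential right ideal of `R`.  (Right ideals of `R` are
submodules of `R` viewed as a module over the opposite ring `Rᵐᵒᵖ`.) -/
def regEssBoth (R : Type*) [Ring R] : Set R :=
  {c : R | (∀ r : R, r * c = 0 → r = 0) ∧ (∀ r : R, c * r = 0 → r = 0) ∧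
    (∀ J : Submodule R R, J ≠ ⊥ → Submodule.span R {c} ⊓ J ≠ ⊥) ∧
    (∀ J : Submodule Rᵐᵒᵖ R, J ≠ ⊥ → Submodule.span Rᵐᵒᵖ {c} ⊓ J ≠ ⊥)}

namespace Submodule

variable {S M M' : Type*} [Ring S] [AddCommGroup M] [Module S M] [AddCommGroup M'] [Module S M']

def IsEssential (N : Submodule S M) : Prop :=
  ∀ J : Submodule S M, J ≠ ⊥ → N ⊓ J ≠ ⊥

theorem isEssential_iff {N : Submodule S M} :
    N.IsEssential ↔ ∀ x : M, x ≠ 0 → ∃ a : S, a • x ≠ 0 ∧ a • x ∈ N := by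
  constructor
  · intro hN x hx
    obtain ⟨y, hy, hy0⟩ := (Submodule.ne_bot_iff _).1
      (hN (span S {x}) (by simpa [span_singleton_eq_bot] using hx))
    obtain ⟨a, rfl⟩ := mem_span_singleton.1 (mem_inf.1 hy).2
    exact ⟨a, hy0, (mem_inf.1 hy).1⟩
  · intro h J hJ
    obtain ⟨x, hxJ, hx0⟩ := (Submodule.ne_bot_iff J).1 hJ
    obtain ⟨a, ha0, haN⟩ := h x hx0
    exact (Submodule.ne_bot_iff _).2 ⟨a • x, mem_inf.2 ⟨haN, J.smul_mem a hxJ⟩, ha0⟩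

theorem isEssential_top : (⊤ : Submodule S M).IsEssential :=
  fun J hJ => by rwa [top_inf_eq]

theorem IsEssential.comap {N : Submodule S M'} (hN : N.IsEssential) (f : M →ₗ[S] M') :
    (N.comap f).IsEssential := by
  refine isEssential_iff.2 fun x hx => ?_
  by_cases hfx : f x = 0
  · exact ⟨1, by simpa using hx, by simp [hfx]⟩
  · obtain ⟨a, ha0, haN⟩ := isEssential_iff.1 hN (f x) hfx
    exact ⟨a, fun h => ha0 (by rw [← map_smul, h, map_zero]), by simpa using haN⟩

theorem IsEssential.map {N : Submodule S M} (hN : N.IsEssential) {f : M →ₗ[S] M'}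
    (hf : Function.Injective f) (hrange : (LinearMap.range f).IsEssential) :
    (N.map f).IsEssential := by
  refine isEssential_iff.2 fun x hx => ?_
  obtain ⟨a, ha0, y, hy⟩ := isEssential_iff.1 hrange x hx
  have hy0 : y ≠ 0 := by
    rintro rfl
    exact ha0 (by rw [← hy, map_zero])
  obtain ⟨b, hb0, hbN⟩ := isEssential_iff.1 hN y hy0
  refine ⟨b * a, ?_, ?_⟩ <;> rw [mul_smul, ← hy, ← map_smul]
  · exact (map_ne_zero_iff f hf).2 hb0
  · exact mem_map_of_mem hbN

end Submodule

open Submodule MulOpposite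

section

variable {R : Type*} [Ring R]

theorem mem_regEssBoth_iff {c : R} :
    c ∈ regEssBoth R ↔ (∀ r : R, r * c = 0 → r = 0) ∧ (∀ r : R, c * r = 0 → r = 0) ∧
      (span R {c}).IsEssential ∧ (span Rᵐᵒᵖ {c}).IsEssential :=
  Iff.rfl

theorem one_mem_regEssBoth : (1 : R) ∈ regEssBoth R := by
  have hL : span R {(1 : R)} = ⊤ :=
    (span_singleton_eq_top_iff R 1).2 fun v => ⟨v, mul_one v⟩
  have hR : span Rᵐᵒᵖ {(1 : R)} = ⊤ :=
    (span_singleton_eq_top_iff Rᵐᵒᵖ 1).2 fun v => ⟨op v, one_mul v⟩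
  refine mem_regEssBoth_iff.2 ⟨fun r h => by simpa using h, fun r h => by simpa using h, ?_, ?_⟩
  · rw [hL]; exact isEssential_top
  · rw [hR]; exact isEssential_top

theorem zero_notMem_regEssBoth [Nontrivial R] : (0 : R) ∉ regEssBoth R :=
  fun h => one_ne_zero (h.1 1 (mul_zero 1))

theorem mul_mem_regEssBoth {s t : R} (hs : s ∈ regEssBoth R) (ht : t ∈ regEssBoth R) :
    s * t ∈ regEssBoth R := by
  obtain ⟨hs₁, hs₂, hsL, hsR⟩ := mem_regEssBoth_iff.1 hs
  obtain ⟨ht₁, ht₂, htL, htR⟩ := mem_regEssBoth_iff.1 ht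
  set ρ := DistribSMul.toLinearMap R R (op t)
  set μ := DistribSMul.toLinearMap Rᵐᵒᵖ R s
  have hρ : Function.Injective ρ := (injective_iff_map_eq_zero ρ).2 ht₁
  have hμ : Function.Injective μ := (injective_iff_map_eq_zero μ).2 hs₂
  have hρ_range : LinearMap.range ρ = span R {t} := by
    ext x; simp [ρ, mem_span_singleton]
  have hμ_range : LinearMap.range μ = span Rᵐᵒᵖ {s} := by
    ext x; simp [μ, mem_span_singleton]
  have hL : span R {s * t} = (span R {s}).map ρ := by
    rw [map_span, Set.image_singleton]; rfl
  have hR : span Rᵐᵒᵖ {s * t} = (span Rᵐᵒᵖ {t}).map μ := by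
    rw [map_span, Set.image_singleton]; rfl
  refine mem_regEssBoth_iff.2 ⟨fun r h => hs₁ r (ht₁ _ (by rwa [← mul_assoc] at h)),
    fun r h => ht₂ r (hs₂ _ (by rwa [mul_assoc] at h)), ?_, ?_⟩
  · rw [hL]; exact hsL.map hρ (hρ_range ▸ htL)
  · rw [hR]; exact htR.map hμ (hμ_range ▸ hsR)

theorem exists_left_ore_of_regEssBoth
    (hmeet : ∀ L : Submodule R R, L.IsEssential → ∃ s ∈ regEssBoth R, s ∈ L)
    (r : R) {s : R} (hs : s ∈ regEssBoth R) : ∃ s' ∈ regEssBoth R, ∃ r' : R, s' * r = r' * s := by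
  obtain ⟨-, -, hsL, -⟩ := mem_regEssBoth_iff.1 hs
  obtain ⟨s', hs', hmem⟩ := hmeet _ (hsL.comap (DistribSMul.toLinearMap R R (op r)))
  obtain ⟨r', hr'⟩ := mem_span_singleton.1 hmem
  exact ⟨s', hs', r', hr'.symm⟩

theorem exists_right_ore_of_regEssBoth
    (hmeet : ∀ L : Submodule Rᵐᵒᵖ R, L.IsEssential → ∃ s ∈ regEssBoth R, s ∈ L)
    (r : R) {s : R} (hs : s ∈ regEssBoth R) : ∃ s' ∈ regEssBoth R, ∃ r' : R, r * s' = s * r' := by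
  obtain ⟨-, -, -, hsR⟩ := mem_regEssBoth_iff.1 hs
  obtain ⟨s', hs', hmem⟩ := hmeet _ (hsR.comap (DistribSMul.toLinearMap Rᵐᵒᵖ R r))
  obtain ⟨r', hr'⟩ := mem_span_singleton.1 hmem
  exact ⟨s', hs', r'.unop, hr'.symm⟩

end

/-- For a nonzero ring `R`, if `C_R^e` meets every essential left ideal
and every essential right ideal of `R`, then `C_R^e` is both a left and a right
denominator set of `R`, and `assₗ(C_R^e) = assᵣ(C_R^e) = 0`. -/
theorem stmt6 {R : Type*} [Ring R] [Nontrivial R]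
    (hmeetL : ∀ L : Submodule R R, (∀ J : Submodule R R, J ≠ ⊥ → L ⊓ J ≠ ⊥) →
      ∃ s ∈ regEssBoth R, s ∈ L)
    (hmeetR : ∀ L : Submodule Rᵐᵒᵖ R, (∀ J : Submodule Rᵐᵒᵖ R, J ≠ ⊥ → L ⊓ J ≠ ⊥) →
      ∃ s ∈ regEssBoth R, s ∈ L) :
    (1 : R) ∈ regEssBoth R ∧ (0 : R) ∉ regEssBoth R ∧
    (∀ s ∈ regEssBoth R, ∀ t ∈ regEssBoth R, s * t ∈ regEssBoth R) ∧
    -- left Ore and left denominator conditions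
    (∀ r : R, ∀ s ∈ regEssBoth R, ∃ s' ∈ regEssBoth R, ∃ r' : R, s' * r = r' * s) ∧
    (∀ r : R, ∀ s ∈ regEssBoth R, r * s = 0 → ∃ t ∈ regEssBoth R, t * r = 0) ∧
    -- right Ore and right denominator conditions
    (∀ r : R, ∀ s ∈ regEssBoth R, ∃ s' ∈ regEssBoth R, ∃ r' : R, r * s' = s * r') ∧
    (∀ r : R, ∀ s ∈ regEssBoth R, s * r = 0 → ∃ t ∈ regEssBoth R, r * t = 0) ∧
    -- `assₗ = assᵣ = 0`
    {r : R | ∃ s ∈ regEssBoth R, s * r = 0} = {0} ∧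
    {r : R | ∃ s ∈ regEssBoth R, r * s = 0} = {0} := by
  refine ⟨one_mem_regEssBoth, zero_notMem_regEssBoth, fun s hs t ht => mul_mem_regEssBoth hs ht,
    fun r s hs => exists_left_ore_of_regEssBoth hmeetL r hs,
    fun r s hs h => ⟨1, one_mem_regEssBoth, by rw [one_mul, hs.1 r h]⟩,
    fun r s hs => exists_right_ore_of_regEssBoth hmeetR r hs,
    fun r s hs h => ⟨1, one_mem_regEssBoth, by rw [mul_one, hs.2.1 r h]⟩,
    Set.eq_singleton_iff_unique_mem.2 ⟨⟨1, one_mem_regEssBoth, mul_zero 1⟩, ?_⟩,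
    Set.eq_singleton_iff_unique_mem.2 ⟨⟨1, one_mem_regEssBoth, zero_mul 1⟩, ?_⟩⟩
  · rintro r ⟨s, hs, h⟩
    exact hs.2.1 r h
  · rintro r ⟨s, hs, h⟩
    exact hs.1 r h
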